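/- arXiv:1102.4023 — 3 statements merged into one kernel-verified Lean document; each statement's English description precedes it below -/
import Mathlib

section
/- Let Θ : A* → A* be an involutive antimorphism and let u ∈ A^ℕ be an infinite word whose language is closed under Θ. Then for every n ≥ 1, C(n+1) − C(n) + 2 ≥ P_Θ(n) + P_Θ(n+1), where C is the factor complexity of u and P_Θ its Θ-palindromic complexity. -/
/-!
Basic notions from combinatorics on words: involutive antimorphisms,
Θ-palindromes, factors of infinite words, palindromic defect, richness.
-/

/-- `Θ` is an involutive antimorphism of the free monoid `A*` (words as lists). -/
def IsAntimorphism {A : Type*} (Θ : List A → List A) : Prop :=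
  (∀ x y : List A, Θ (x ++ y) = Θ y ++ Θ x) ∧ ∀ x : List A, Θ (Θ x) = x

/-- The factor `u_i u_{i+1} … u_{i+n-1}` of the infinite word `u`. -/
def factorAt {A : Type*} (u : ℕ → A) (i n : ℕ) : List A :=
  (List.range n).map fun k => u (i + k)

/-- `i` is an occurrence of `w` in the infinite word `u`. -/
def OccursAt {A : Type*} (u : ℕ → A) (w : List A) (i : ℕ) : Prop :=
  w = factorAt u i w.length

/-- `w` is a factor of the infinite word `u`. -/
def IsFactorOf {A : Type*} (w : List A) (u : ℕ → A) : Prop :=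
  ∃ i, OccursAt u w i

/-- The prefix of length `n` of the infinite word `u`. -/
def prefixWord {A : Type*} (u : ℕ → A) (n : ℕ) : List A :=
  factorAt u 0 n

/-- `u` is recurrent: every factor has infinitely many occurrences. -/
def Recurrent {A : Type*} (u : ℕ → A) : Prop :=
  ∀ w, IsFactorOf w u → ∀ N, ∃ i, N ≤ i ∧ OccursAt u w i

/-- `u` is uniformly recurrent: every factor occurs with bounded gaps
(equivalently, every factor has finitely many return words). -/
def UniformlyRecurrent {A : Type*} (u : ℕ → A) : Prop :=
  ∀ w, IsFactorOf w u → ∃ R, ∀ N, ∃ i, N ≤ i ∧ i < N + R ∧ OccursAt u w i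

/-- `i` is an occurrence of the word `s` in the finite word `r`. -/
def OccursIn {A : Type*} (s r : List A) (i : ℕ) : Prop :=
  i + s.length ≤ r.length ∧ s = (r.drop i).take s.length

/-- `s` occurs exactly once in `r`. -/
def Unioccurrent {A : Type*} (s r : List A) : Prop :=
  Set.ncard {i | OccursIn s r i} = 1

/-- The set `Pal_Θ(w)` of `Θ`-palindromic factors of the finite word `w`
(the empty word included). -/
def palSet {A : Type*} (Θ : List A → List A) (w : List A) : Set (List A) :=
  {p | p <:+: w ∧ Θ p = p}

/-- `γ_Θ(w)`: the number of pairs `{a, Θ(a)}` where `a` is a letter occurring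
in `w` with `a ≠ Θ(a)`. -/
noncomputable def gammaTheta {A : Type*} (Θ : List A → List A) (w : List A) : ℕ :=
  Set.ncard {P : Set A | ∃ a, a ∈ w ∧ Θ [a] ≠ [a] ∧ P = {b | [b] = [a] ∨ [b] = Θ [a]}}

/-- The `Θ`-palindromic defect `D_Θ(w) = |w| + 1 - γ_Θ(w) - #Pal_Θ(w)` of a finite word. -/
noncomputable def defect {A : Type*} (Θ : List A → List A) (w : List A) : ℤ :=
  (w.length : ℤ) + 1 - gammaTheta Θ w - (palSet Θ w).ncard

/-- The infinite word `u` has finite `Θ`-palindromic defect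
(`D_Θ(u) = sup { D_Θ(w) : w factor of u } < ∞`), i.e. `u` is almost `Θ`-rich. -/
def FiniteDefect {A : Type*} (Θ : List A → List A) (u : ℕ → A) : Prop :=
  ∃ C : ℤ, ∀ w, IsFactorOf w u → defect Θ w ≤ C

/-- The infinite word `u` is `Θ`-rich: every factor `w` satisfies
`#Pal_Θ(w) = |w| + 1 - γ_Θ(w)`, i.e. has zero `Θ`-defect. -/
def RichWord {A : Type*} (Θ : List A → List A) (u : ℕ → A) : Prop :=
  ∀ w, IsFactorOf w u → defect Θ w = 0

/-- The language of `u` is closed under `Θ`. -/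
def LangClosedUnder {A : Type*} (Θ : List A → List A) (u : ℕ → A) : Prop :=
  ∀ w, IsFactorOf w u → IsFactorOf (Θ w) u

/-- `u` is the image of the infinite word `v` under the monoid morphism
`B* → A*` determined by `φ` on letters, i.e. `u = φ(v₀)φ(v₁)φ(v₂)…`. -/
def IsMorphicImage {A B : Type*} (u : ℕ → A) (φ : B → List A) (v : ℕ → B) : Prop :=
  (∀ n, OccursAt u ((prefixWord v n).flatMap φ) 0) ∧
    ∀ N, ∃ n, N ≤ ((prefixWord v n).flatMap φ).length

/-- The occurrences of `w` and `w'` in `u` alternate: listing in increasing order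
all occurrences of `w` or `w'`, consecutive indices are alternately occurrences
of `w` and of `w'` (between two occurrences of one of them, the second of which is
not an occurrence of the other, there is an occurrence of the other). -/
def AlternateIn {A : Type*} (u : ℕ → A) (w w' : List A) : Prop :=
  (∀ i j, i < j → OccursAt u w i → OccursAt u w j → ¬ OccursAt u w' j →
    ∃ k, i < k ∧ k < j ∧ OccursAt u w' k) ∧
  (∀ i j, i < j → OccursAt u w' i → OccursAt u w' j → ¬ OccursAt u w j →
    ∃ k, i < k ∧ k < j ∧ OccursAt u w k)

/-- Factor complexity `C(n)` of the infinite word `u`. -/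
noncomputable def complexity {A : Type*} (u : ℕ → A) (n : ℕ) : ℕ :=
  Set.ncard {w : List A | IsFactorOf w u ∧ w.length = n}

/-- `Θ`-palindromic complexity `P_Θ(n)` of the infinite word `u`. -/
noncomputable def palComplexity {A : Type*} (Θ : List A → List A) (u : ℕ → A) (n : ℕ) : ℕ :=
  Set.ncard {w : List A | IsFactorOf w u ∧ w.length = n ∧ Θ w = w}

/-- `r` is a complete return word of `w` in `u`: a factor of `u` with exactly two
occurrences of `w`, one as a prefix and one as a suffix. -/
def IsCompleteReturnWord {A : Type*} (u : ℕ → A) (w r : List A) : Prop :=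
  IsFactorOf r u ∧ w <+: r ∧ w <:+ r ∧ Set.ncard {i | OccursIn w r i} = 2

private lemma theta_nil {A : Type*} {Θ : List A → List A} (hΘ : IsAntimorphism Θ) :
    Θ [] = [] := by
  have h := hΘ.1 [] []
  rw [List.append_nil] at h
  exact List.self_eq_append_right.mp h

private lemma theta_len {A : Type*} {Θ : List A → List A} (hΘ : IsAntimorphism Θ) :
    ∀ w : List A, (Θ w).length = w.length := by
  have hne : ∀ a : A, Θ [a] ≠ [] := by
    intro a h
    have := hΘ.2 [a]
    rw [h, theta_nil hΘ] at this
    exact List.cons_ne_nil a [] this.symm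
  have hmono : ∀ w : List A, w.length ≤ (Θ w).length := by
    intro w
    induction w with
    | nil => simp
    | cons a t ih =>
      have : Θ (a :: t) = Θ t ++ Θ [a] := by
        have := hΘ.1 [a] t; simpa using this
      rw [this]
      simp only [List.length_append, List.length_cons]
      have h1 : 1 ≤ (Θ [a]).length := List.length_pos_iff.mpr (hne a)
      omega
  intro w
  have h1 := hmono w
  have h2 := hmono (Θ w)
  rw [hΘ.2 w] at h2
  omega

private lemma theta_single {A : Type*} {Θ : List A → List A} (hΘ : IsAntimorphism Θ)
    (a : A) : ∃ b, Θ [a] = [b] := by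
  have := theta_len hΘ [a]
  simp at this
  exact List.length_eq_one_iff.mp this

private lemma factorAt_length {A : Type*} (u : ℕ → A) (i n : ℕ) :
    (factorAt u i n).length = n := by simp [factorAt]

private lemma factorAt_isFactor {A : Type*} (u : ℕ → A) (i n : ℕ) :
    IsFactorOf (factorAt u i n) u := by
  refine ⟨i, ?_⟩
  unfold OccursAt
  rw [factorAt_length]

private lemma factorAt_succ_right {A : Type*} (u : ℕ → A) (i n : ℕ) :
    factorAt u i (n + 1) = factorAt u i n ++ [u (i + n)] := by
  simp [factorAt, List.range_succ]

private lemma factorAt_succ_left {A : Type*} (u : ℕ → A) (i n : ℕ) :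
    factorAt u i (n + 1) = u i :: factorAt u (i + 1) n := by
  unfold factorAt
  rw [List.range_succ_eq_map]
  simp only [List.map_cons, List.map_map, Nat.add_zero]
  congr 1
  apply List.map_congr_left
  intro k _
  simp only [Function.comp_apply]
  congr 1
  omega

private lemma orbit_count {α : Type*} [DecidableEq α] (f : α → α) (hf : ∀ x, f (f x) = x)
    (s : Finset α) (hs : ∀ x ∈ s, f x ∈ s) :
    s.card + (s.filter fun x => f x = x).card
      = 2 * (s.image fun x => ({x, f x} : Finset α)).card := by
  classical
  set g : α → Finset α := fun x => ({x, f x} : Finset α) with hg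
  set I := s.image g with hI
  have h1 : s.card = ∑ c ∈ I, (s.filter fun a => g a = c).card :=
    Finset.card_eq_sum_card_image g s
  set P := s.filter (fun x => f x = x) with hP
  have hPsub : P ⊆ s := Finset.filter_subset _ _
  have h2 : P.card = ∑ c ∈ I, (P.filter fun a => g a = c).card := by
    rw [Finset.card_eq_sum_card_image g P]
    apply Finset.sum_subset (Finset.image_subset_image hPsub)
    intro c _ hc
    rw [Finset.card_eq_zero, Finset.filter_eq_empty_iff]
    intro a ha hgc
    exact hc (Finset.mem_image.mpr ⟨a, ha, hgc⟩)
  have h3 : ∀ c ∈ I, (s.filter fun a => g a = c).card + (P.filter fun a => g a = c).card = 2 := by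
    intro c hc
    obtain ⟨w, hw, hwc⟩ := Finset.mem_image.mp hc
    by_cases hfw : f w = w
    · have e1 : (s.filter fun a => g a = c) = {w} := by
        apply Finset.eq_singleton_iff_unique_mem.mpr
        constructor
        · exact Finset.mem_filter.mpr ⟨hw, hwc⟩
        · intro x hx
          obtain ⟨hxs, hxc⟩ := Finset.mem_filter.mp hx
          have hxin : x ∈ g x := Finset.mem_insert_self _ _
          rw [hxc, ← hwc, hg] at hxin
          simp only [hfw, Finset.mem_insert, Finset.mem_singleton, or_self] at hxin
          exact hxin
      have e2 : (P.filter fun a => g a = c) = {w} := by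
        apply Finset.eq_singleton_iff_unique_mem.mpr
        constructor
        · exact Finset.mem_filter.mpr ⟨Finset.mem_filter.mpr ⟨hw, hfw⟩, hwc⟩
        · intro x hx
          obtain ⟨hxs, hxc⟩ := Finset.mem_filter.mp hx
          have hxin : x ∈ g x := Finset.mem_insert_self _ _
          rw [hxc, ← hwc, hg] at hxin
          simp only [hfw, Finset.mem_insert, Finset.mem_singleton, or_self] at hxin
          exact hxin
      rw [e1, e2]; simp
    · have e1 : (s.filter fun a => g a = c) = {w, f w} := by
        apply Finset.Subset.antisymm
        · intro x hx
          obtain ⟨hxs, hxc⟩ := Finset.mem_filter.mp hx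
          have hxin : x ∈ g x := Finset.mem_insert_self _ _
          rw [hxc, ← hwc] at hxin
          exact hxin
        · intro x hx
          simp only [Finset.mem_insert, Finset.mem_singleton] at hx
          rcases hx with rfl | rfl
          · exact Finset.mem_filter.mpr ⟨hw, hwc⟩
          · refine Finset.mem_filter.mpr ⟨hs w hw, ?_⟩
            rw [← hwc, hg]
            simp only [hf w]
            exact Finset.pair_comm (f w) w
      have e2 : (P.filter fun a => g a = c) = ∅ := by
        rw [Finset.filter_eq_empty_iff]
        intro a ha hgc
        have haP : f a = a := (Finset.mem_filter.mp ha).2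
        have hcard : c.card = 1 := by
          rw [← hgc, hg]; simp [haP]
        have hcard2 : c.card = 2 := by
          rw [← hwc, hg]; exact Finset.card_pair (fun h => hfw h.symm)
        omega
      rw [e1, e2, Finset.card_empty, Finset.card_pair (fun h => hfw h.symm)]
  have := Finset.sum_congr rfl h3
  rw [Finset.sum_add_distrib, ← h1, ← h2] at this
  rw [this, Finset.sum_const, smul_eq_mul, mul_comm]

/-- **Inequality (2).** If the language of `u` is closed under `Θ`, then
`C(n+1) - C(n) + 2 ≥ P_Θ(n) + P_Θ(n+1)` for all `n ≥ 1`. -/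
theorem complexity_palindromic_inequality
    {A : Type*} [Fintype A] (Θ : List A → List A) (hΘ : IsAntimorphism Θ)
    (u : ℕ → A) (hcl : LangClosedUnder Θ u) :
    ∀ n : ℕ, 1 ≤ n →
      (palComplexity Θ u n : ℤ) + palComplexity Θ u (n + 1) ≤
        (complexity u (n + 1) : ℤ) - complexity u n + 2 := by
  classical
  intro n _
  have hff : ∀ w, Θ (Θ w) = w := hΘ.2
  have hlen := theta_len hΘ
  -- finiteness of the factor sets
  have hfin : ∀ m : ℕ, {w : List A | IsFactorOf w u ∧ w.length = m}.Finite := by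
    intro m
    apply Set.Finite.subset (Set.finite_range (fun v : Fin m → A => List.ofFn v))
    rintro w ⟨-, hlw⟩
    subst hlw
    exact ⟨w.get, List.ofFn_get w⟩
  set S : ℕ → Finset (List A) := fun m => (hfin m).toFinset with hS
  have hmemS : ∀ (m : ℕ) (w : List A), w ∈ S m ↔ IsFactorOf w u ∧ w.length = m := by
    intro m w
    simp [hS, Set.Finite.mem_toFinset]
  have hScl : ∀ m, ∀ w ∈ S m, Θ w ∈ S m := by
    intro m w hw
    rw [hmemS] at hw ⊢
    exact ⟨hcl w hw.1, by rw [hlen, hw.2]⟩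
  have hSrep : ∀ m, ∀ w ∈ S m, ∃ i, w = factorAt u i m := by
    intro m w hw
    obtain ⟨⟨i, hi⟩, hlw⟩ := (hmemS m w).mp hw
    unfold OccursAt at hi
    rw [hlw] at hi
    exact ⟨i, hi⟩
  -- vertices and edges of the Rauzy graph
  set W : ℕ → List A := fun i => factorAt u i n with hW
  set E : ℕ → List A := fun i => factorAt u i (n + 1) with hE
  have hWmem : ∀ i, W i ∈ S n := fun i =>
    (hmemS _ _).mpr ⟨factorAt_isFactor u i n, factorAt_length u i n⟩
  have hEmem : ∀ i, E i ∈ S (n + 1) := fun i =>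
    (hmemS _ _).mpr ⟨factorAt_isFactor u i (n + 1), factorAt_length u i (n + 1)⟩
  -- classes
  set g : List A → Finset (List A) := fun w => ({w, Θ w} : Finset (List A)) with hg
  have hgg : ∀ w, g (Θ w) = g w := by
    intro w
    simp only [hg, hff w]
    exact Finset.pair_comm _ _
  set IV := (S n).image g with hIV
  set IE := (S (n + 1)).image g with hIE
  have hA : (S n).card + ((S n).filter fun w => Θ w = w).card = 2 * IV.card :=
    orbit_count Θ hff (S n) (hScl n)
  have hB : (S (n + 1)).card + ((S (n + 1)).filter fun w => Θ w = w).card = 2 * IE.card :=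
    orbit_count Θ hff (S (n + 1)) (hScl (n + 1))
  -- the key structural lemma
  have hkey : ∀ i j, Θ (E i) = E j → g (W (j + 1)) = g (W i) := by
    intro i j h
    obtain ⟨b, hb⟩ := theta_single hΘ (u (i + n))
    have h1 : Θ (E i) = b :: Θ (W i) := by
      rw [hE]
      simp only
      rw [factorAt_succ_right u i n, hΘ.1, hb]
      rfl
    have h2 : E j = u j :: W (j + 1) := factorAt_succ_left u j n
    rw [h1, h2] at h
    obtain ⟨-, h3⟩ := List.cons_eq_cons.mp h
    rw [← h3, hgg]
  -- least-occurrence index of a vertex class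
  have hVex : ∀ c ∈ IV, ∃ i, g (W i) = c := by
    intro c hc
    obtain ⟨w, hw, hwc⟩ := Finset.mem_image.mp hc
    obtain ⟨i, hi⟩ := hSrep n w hw
    refine ⟨i, ?_⟩
    show g (factorAt u i n) = c
    rw [← hi]
    exact hwc
  set c0 := g (W 0) with hc0
  have hc0mem : c0 ∈ IV := Finset.mem_image_of_mem g (hWmem 0)
  set idx : Finset (List A) → ℕ :=
    fun c => if h : ∃ i, g (W i) = c then Nat.find h else 0 with hidx
  have hidx_spec : ∀ c ∈ IV, g (W (idx c)) = c := by
    intro c hc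
    have h := hVex c hc
    simp only [hidx, dif_pos h]
    exact Nat.find_spec h
  have hidx_min : ∀ c ∈ IV, ∀ j < idx c, g (W j) ≠ c := by
    intro c hc j hj
    have h := hVex c hc
    simp only [hidx, dif_pos h] at hj ⊢
    exact Nat.find_min h hj
  have hidx_pos : ∀ c ∈ IV.erase c0, 1 ≤ idx c := by
    intro c hc
    by_contra hlt
    have h0 : idx c = 0 := by omega
    have h1 := hidx_spec c (Finset.mem_of_mem_erase hc)
    rw [h0] at h1
    exact (Finset.ne_of_mem_erase hc) h1.symm
  -- the injection φ from non-root vertex classes to non-palindromic edge classes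
  set φ : Finset (List A) → Finset (List A) := fun c => g (E (idx c - 1)) with hφ
  have hφnotpal : ∀ c ∈ IV.erase c0, Θ (E (idx c - 1)) ≠ E (idx c - 1) := by
    intro c hc h
    have hpos := hidx_pos c hc
    have h1 := hkey _ _ h
    have h2 : idx c - 1 + 1 = idx c := by omega
    rw [h2, hidx_spec c (Finset.mem_of_mem_erase hc)] at h1
    exact hidx_min c (Finset.mem_of_mem_erase hc) (idx c - 1) (by omega) h1.symm
  have hφmem : ∀ c ∈ IV.erase c0, φ c ∈ IE := by
    intro c _
    exact Finset.mem_image_of_mem g (hEmem _)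
  have hφinj : Set.InjOn φ (IV.erase c0) := by
    intro c hcm c' hcm' heq
    have hc : c ∈ IV := Finset.mem_of_mem_erase hcm
    have hc' : c' ∈ IV := Finset.mem_of_mem_erase hcm'
    have hi1 : 1 ≤ idx c := hidx_pos c hcm
    have hj1 : 1 ≤ idx c' := hidx_pos c' hcm'
    have hmm : E (idx c' - 1) ∈ g (E (idx c - 1)) := by
      have : E (idx c' - 1) ∈ g (E (idx c' - 1)) := Finset.mem_insert_self _ _
      rw [show g (E (idx c' - 1)) = φ c' from rfl, ← heq] at this
      exact this
    simp only [hg, Finset.mem_insert, Finset.mem_singleton] at hmm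
    rcases hmm with h | h
    · -- same edge: same ending vertex
      have hl : u (idx c' - 1) :: W (idx c' - 1 + 1) = u (idx c - 1) :: W (idx c - 1 + 1) := by
        rw [← factorAt_succ_left u (idx c' - 1) n, ← factorAt_succ_left u (idx c - 1) n]
        exact h
      obtain ⟨-, h3⟩ := List.cons_eq_cons.mp hl
      have e1 : idx c' - 1 + 1 = idx c' := by omega
      have e2 : idx c - 1 + 1 = idx c := by omega
      rw [e1, e2] at h3
      rw [← hidx_spec c hc, ← hidx_spec c' hc', h3]
    · -- reversed edge: contradiction with minimality on both sides
      have k1 := hkey (idx c - 1) (idx c' - 1) h.symm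
      have h' : Θ (E (idx c' - 1)) = E (idx c - 1) := by rw [h, hff]
      have k2 := hkey (idx c' - 1) (idx c - 1) h'
      have e1 : idx c' - 1 + 1 = idx c' := by omega
      have e2 : idx c - 1 + 1 = idx c := by omega
      rw [e1] at k1
      rw [e2] at k2
      rw [hidx_spec c' hc'] at k1
      rw [hidx_spec c hc] at k2
      -- k1 : c' = g (W (idx c - 1)), so g (W (idx c - 1)) = c' with idx c - 1 < idx c'
      have m1 : ¬ idx c - 1 < idx c' := fun hlt => hidx_min c' hc' _ hlt k1.symm
      have m2 : ¬ idx c' - 1 < idx c := fun hlt => hidx_min c hc _ hlt k2.symm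
      omega
  -- palindromic edge classes
  have hpal_g : ∀ p : List A, Θ p = p → g p = {p} := by
    intro p hp
    simp [hg, hp]
  set PalE := (S (n + 1)).filter (fun w => Θ w = w) with hPalE
  set Φ := (IV.erase c0).image φ with hΦ
  set Ψ := PalE.image g with hΨ
  have hΨcard : Ψ.card = PalE.card := by
    apply Finset.card_image_of_injOn
    intro p hp q hq hpq
    have hp2 : Θ p = p := (Finset.mem_filter.mp hp).2
    have hq2 : Θ q = q := (Finset.mem_filter.mp hq).2
    rw [hpal_g p hp2, hpal_g q hq2] at hpq
    exact Finset.singleton_injective hpq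
  have hΦcard : Φ.card = (IV.erase c0).card := Finset.card_image_of_injOn hφinj
  have hsub : Φ ∪ Ψ ⊆ IE := by
    intro x hx
    rcases Finset.mem_union.mp hx with hx | hx
    · obtain ⟨c, hc, rfl⟩ := Finset.mem_image.mp hx
      exact hφmem c hc
    · obtain ⟨p, hp, rfl⟩ := Finset.mem_image.mp hx
      exact Finset.mem_image_of_mem g (Finset.mem_of_mem_filter p hp)
  have hdisj : Disjoint Φ Ψ := by
    rw [Finset.disjoint_left]
    intro x hxΦ hxΨ
    obtain ⟨c, hc, rfl⟩ := Finset.mem_image.mp hxΦ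
    obtain ⟨p, hp, hpx⟩ := Finset.mem_image.mp hxΨ
    have hp2 : Θ p = p := (Finset.mem_filter.mp hp).2
    rw [hpal_g p hp2] at hpx
    have hmm : E (idx c - 1) ∈ ({p} : Finset (List A)) := by
      rw [hpx]
      exact Finset.mem_insert_self _ _
    rw [Finset.mem_singleton] at hmm
    apply hφnotpal c hc
    rw [hmm, hp2]
  have hcount : Φ.card + Ψ.card ≤ IE.card := by
    rw [← Finset.card_union_of_disjoint hdisj]
    exact Finset.card_le_card hsub
  have herase : (IV.erase c0).card + 1 = IV.card := Finset.card_erase_add_one hc0mem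
  -- translate complexities to Finset cards
  have hCn : complexity u n = (S n).card := Set.ncard_eq_toFinset_card _ (hfin n)
  have hCn1 : complexity u (n + 1) = (S (n + 1)).card :=
    Set.ncard_eq_toFinset_card _ (hfin (n + 1))
  have hPm : ∀ m, palComplexity Θ u m = ((S m).filter (fun w => Θ w = w)).card := by
    intro m
    rw [palComplexity, ← Set.ncard_coe_finset]
    congr 1
    ext w
    simp only [Set.mem_setOf_eq, Finset.coe_filter, hmemS]
    tauto
  rw [hCn, hCn1, hPm n, hPm (n + 1), ← hPalE]
  omega
end

section
/- Let Θ : A* → A* be an involutive antimorphism, let p ∈ A* be a Θ-palindrome, and let q⁽¹⁾, …, q⁽ᴹ⁾ ∈ A* be words satisfying p·Θ(q⁽ⁱ⁾) = q⁽ⁱ⁾·p for every i. Let B = {1, …, M} and let φ : B* → A* be the monoid morphism defined by φ(i) = q⁽ⁱ⁾. Then for every w ∈ B*, Θ(φ(w)·p) = φ(R(w))·p, where R is the reversal map on B*. In particular, if w ∈ B* is a palindrome (R(w) = w), then φ(w)·p is a Θ-palindrome. -/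
/-- **Relation (4).** If `p` is a `Θ`-palindrome and the words `q⁽ⁱ⁾` satisfy
`p·Θ(q⁽ⁱ⁾) = q⁽ⁱ⁾·p`, then the morphism `φ(i) = q⁽ⁱ⁾` satisfies
`Θ(φ(w)p) = φ(R(w))p` for every word `w`; in particular `φ(w)p` is a
`Θ`-palindrome whenever `w` is a palindrome. -/
theorem theta_of_morphic_image_append
    {A : Type*} [Fintype A] (Θ : List A → List A) (hΘ : IsAntimorphism Θ)
    (p : List A) (hp : Θ p = p) (M : ℕ) (q : Fin M → List A)
    (hq : ∀ i : Fin M, p ++ Θ (q i) = q i ++ p) :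
    (∀ w : List (Fin M), Θ (w.flatMap q ++ p) = w.reverse.flatMap q ++ p) ∧
    (∀ w : List (Fin M), w.reverse = w → Θ (w.flatMap q ++ p) = w.flatMap q ++ p) := by

  have base : ∀ w : List (Fin M), Θ (w.flatMap q ++ p) = w.reverse.flatMap q ++ p := by
    intro w
    induction w with
    | nil => simpa using hp
    | cons i t ih =>
      rw [List.flatMap_cons, List.append_assoc, hΘ.1, ih, List.append_assoc, hq i]
      simp
  exact ⟨base, fun w hw => by rw [base w, hw]⟩
end

section
/- Let A be a finite alphabet, p ∈ A* a non-empty word, and q⁽¹⁾, …, q⁽ᴹ⁾ ∈ A* pairwise distinct words such that for each i the word q⁽ⁱ⁾·p has exactly two occurrences of p, namely as a prefix and as a suffix (i.e., each q⁽ⁱ⁾·p is a complete return word of p). Let B = {1, …, M} and φ : B* → A* the monoid morphism with φ(i) = q⁽ⁱ⁾. Then φ is injective; more precisely, for all w, v ∈ B*, φ(w)·p = φ(v)·p implies w = v. -/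
lemma occ_of_prefix {A : Type*} {s r t : List A} {i : ℕ}
    (h : OccursIn s t i) (hrt : r <+: t) (hi : i + s.length ≤ r.length) :
    OccursIn s r i := by
  obtain ⟨z, rfl⟩ := hrt
  have h2 : s = ((r ++ z).drop i).take s.length := h.2
  rw [List.drop_append_of_le_length (by omega),
    List.take_append_of_le_length (by rw [List.length_drop]; omega)] at h2
  exact ⟨hi, h2⟩

lemma occ_prefix {A : Type*} {s r : List A} (h : s <+: r) : OccursIn s r 0 := by
  obtain ⟨z, rfl⟩ := h
  exact ⟨by simp, by simp⟩

lemma occ_append {A : Type*} (s r : List A) : OccursIn s (r ++ s) r.length := by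
  refine ⟨by simp, by simp⟩

section Main
variable {A : Type*} (p : List A) (hp : p ≠ []) (M : ℕ)
    (q : Fin M → List A)
    (hret : ∀ i : Fin M, p <+: q i ++ p ∧
      Set.ncard {j : ℕ | OccursIn p (q i ++ p) j} = 2)

include hp hret in
lemma q_ne_nil (i : Fin M) : q i ≠ [] := by
  intro h
  have h2 := (hret i).2
  rw [h] at h2
  simp only [List.nil_append] at h2
  have : {j : ℕ | OccursIn p p j} = {0} := by
    ext j
    simp only [Set.mem_setOf_eq, Set.mem_singleton_iff, OccursIn]
    constructor
    · rintro ⟨h1, -⟩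
      have : 0 < p.length := List.length_pos_iff.2 hp
      omega
    · rintro rfl; exact ⟨by simp, by simp⟩
  rw [this] at h2
  simp at h2

include hp hret in
lemma key (i j : Fin M) (hqinj : Function.Injective q) (t t' : List A)
    (ht : p <+: t) (ht' : p <+: t') (heq : q i ++ t = q j ++ t')
    (hle : (q i).length ≤ (q j).length) : i = j := by
  -- q i is a prefix of q j
  have hpre : q i <+: q j := by
    have h1 : q i <+: q j ++ t' := heq ▸ List.prefix_append _ _
    exact List.prefix_of_prefix_length_le h1 (List.prefix_append _ _) hle
  have hj0 : (q j).length ≠ 0 := by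
    simpa using q_ne_nil p hp M q hret j
  have hi0 : (q i).length ≠ 0 := by
    simpa using q_ne_nil p hp M q hret i
  -- occurrence of p at position |q i| in q j ++ p
  have hocc : OccursIn p (q j ++ p) (q i).length := by
    have h1 : OccursIn p (q j ++ t') (q i).length := by
      rw [← heq]
      obtain ⟨z, rfl⟩ := ht
      refine ⟨by simp, ?_⟩
      rw [List.drop_append_of_le_length le_rfl]
      simp
    refine occ_of_prefix h1 ?_ (by simp [hle])
    obtain ⟨z, rfl⟩ := ht'
    exact ⟨z, by simp⟩
  -- the occurrence set is exactly {0, |q j|}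
  have h0 : OccursIn p (q j ++ p) 0 := occ_prefix (hret j).1
  have hn : OccursIn p (q j ++ p) (q j).length := occ_append p (q j)
  have hfin : {k : ℕ | OccursIn p (q j ++ p) k}.Finite := by
    apply Set.Finite.subset (Set.finite_Iic (q j ++ p).length)
    intro k hk
    exact Set.mem_Iic.2 (le_trans (Nat.le_add_right _ _) hk.1)
  have hsub : ({0, (q j).length} : Set ℕ) ⊆ {k : ℕ | OccursIn p (q j ++ p) k} := by
    rintro k (rfl | rfl)
    · exact h0
    · exact hn
  have hcard2 : ({0, (q j).length} : Set ℕ).ncard = 2 := by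
    rw [Set.ncard_pair (Ne.symm hj0)]
  have hEq : ({0, (q j).length} : Set ℕ) = {k : ℕ | OccursIn p (q j ++ p) k} :=
    Set.eq_of_subset_of_ncard_le hsub (by rw [(hret j).2, hcard2]) hfin
  have hmem : (q i).length ∈ ({0, (q j).length} : Set ℕ) := hEq ▸ hocc
  have hlen : (q i).length = (q j).length := by
    rcases hmem with h | h
    · exact absurd h hi0
    · exact h
  exact hqinj (List.prefix_iff_eq_take.1 hpre ▸ by rw [hlen, List.take_length])

include hret in
lemma p_prefix_flat : ∀ w : List (Fin M), p <+: w.flatMap q ++ p := by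
  intro w
  induction w with
  | nil => simp
  | cons i w ih =>
    calc p <+: q i ++ p := (hret i).1
    _ <+: q i ++ (w.flatMap q ++ p) := by
        obtain ⟨z, hz⟩ := ih
        exact ⟨z, by rw [List.append_assoc, hz]⟩
    _ = (i :: w).flatMap q ++ p := by simp

end Main

/-- **Injectivity of the morphism `φ`.** If each `q⁽ⁱ⁾·p` is a complete return
word of the non-empty word `p` and the `q⁽ⁱ⁾` are pairwise distinct, then
`φ(w)p = φ(v)p` implies `w = v`. -/
theorem return_word_morphism_injective
    {A : Type*} [Fintype A] (p : List A) (hp : p ≠ []) (M : ℕ)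
    (q : Fin M → List A) (hqinj : Function.Injective q)
    (hret : ∀ i : Fin M, p <+: q i ++ p ∧
      Set.ncard {j : ℕ | OccursIn p (q i ++ p) j} = 2) :
    ∀ w v : List (Fin M), w.flatMap q ++ p = v.flatMap q ++ p → w = v := by
  intro w
  induction w with
  | nil =>
    intro v hv
    cases v with
    | nil => rfl
    | cons j v =>
      exfalso
      simp only [List.flatMap_nil, List.nil_append, List.flatMap_cons,
        List.append_assoc] at hv
      have hlen := congrArg List.length hv
      simp only [List.length_append] at hlen
      have := List.length_pos_iff.2 (q_ne_nil p hp M q hret j)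
      omega
  | cons i w ih =>
    intro v hv
    cases v with
    | nil =>
      exfalso
      simp only [List.flatMap_nil, List.nil_append, List.flatMap_cons,
        List.append_assoc] at hv
      have hlen := congrArg List.length hv
      simp only [List.length_append] at hlen
      have := List.length_pos_iff.2 (q_ne_nil p hp M q hret i)
      omega
    | cons j v =>
      simp only [List.flatMap_cons, List.append_assoc] at hv
      have hij : i = j := by
        rcases le_total (q i).length (q j).length with h | h
        · exact key p hp M q hret i j hqinj _ _ (p_prefix_flat p M q hret w)
            (p_prefix_flat p M q hret v) hv h
        · exact (key p hp M q hret j i hqinj _ _ (p_prefix_flat p M q hret v)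
            (p_prefix_flat p M q hret w) hv.symm h).symm
      subst hij
      have : w.flatMap q ++ p = v.flatMap q ++ p :=
        List.append_cancel_left hv
      rw [ih v this]
end
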